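/- Let C be an additive category with binary biproducts. Let f' : E' → F', f : E → F, g' : E' → E and g : F' → F be morphisms of cochain complexes in C, and let h be a homotopy between g∘f' and f∘g' (i.e. g f' − f g' = d h + h d, with h of degree −1). Then the degreewise maps ψ : cone(f') → cone(f), ψ(x',y') = (g'(x'), g(y') + h(x')), and φ : cone(−g') → cone(g), φ(x',x) = (−f'(x'), f(x) + h(x')), are morphisms of complexes, and a suitable reordering of the direct sum factors defines an isomorphism of complexes cone(φ) ≅ cone(ψ). -/

import Mathlib

/-! Cochain complexes over an additive category with binary biproducts, mapping
cones, and homotopies (Burgos Gil–Freixas–Liţcanu, Lemma 2.3). -/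

noncomputable section

open CategoryTheory Limits

/-- A cochain complex in an additive category. -/
structure Cx (C : Type*) [Category C] [Preadditive C] where
  X : ℤ → C
  d : ∀ n, X n ⟶ X (n + 1)
  dd : ∀ n, d n ≫ d (n + 1) = 0

variable {C : Type*} [Category C] [Preadditive C] [HasBinaryBiproducts C]

/-- A morphism of cochain complexes. -/
@[ext] structure CxHom (E F : Cx C) where
  f : ∀ n, E.X n ⟶ F.X n
  comm : ∀ n, f n ≫ F.d n = E.d n ≫ f (n + 1)

/-- The identity morphism of complexes. -/
def CxHom.id (E : Cx C) : CxHom E E := ⟨fun _ => 𝟙 _, by simp⟩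

/-- Composition of morphisms of complexes. -/
def CxHom.comp {E F G : Cx C} (v : CxHom F G) (u : CxHom E F) : CxHom E G where
  f n := u.f n ≫ v.f n
  comm n := by rw [Category.assoc, v.comm, ← Category.assoc, u.comm, Category.assoc]

/-- The negative of a morphism of complexes. -/
def CxHom.neg {E F : Cx C} (u : CxHom E F) : CxHom E F where
  f n := -u.f n
  comm n := by simp [u.comm]

/-- The mapping cone of a morphism of complexes:
`cone(u)ⁿ = Eⁿ⁺¹ ⊞ Fⁿ` with differential `d(x,y) = (-dx, u(x) + dy)`. -/
def cone {E F : Cx C} (u : CxHom E F) : Cx C where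
  X n := E.X (n + 1) ⊞ F.X n
  d n := biprod.lift (biprod.fst ≫ (-E.d (n + 1)))
    (biprod.fst ≫ u.f (n + 1) + biprod.snd ≫ F.d n)
  dd n := by
    apply biprod.hom_ext
    · simp [E.dd]
    · simp only [Category.assoc, biprod.lift_snd, zero_comp, Preadditive.comp_add]
      rw [← Category.assoc _ biprod.fst _, ← Category.assoc _ biprod.snd _,
        biprod.lift_fst, biprod.lift_snd]
      simp only [Preadditive.add_comp, Category.assoc, Preadditive.neg_comp,
        Preadditive.comp_neg, ← u.comm, F.dd, comp_zero]
      abel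

def IsHomotopy {X Y : Cx C} (p q : CxHom X Y) (h : ∀ n, X.X (n + 1) ⟶ Y.X n) : Prop :=
  ∀ n, p.f (n + 1) - q.f (n + 1) = X.d (n + 1) ≫ h (n + 1) + h n ≫ Y.d n

/-- `(x', y') ↦ (u' x', u y' + h x')`; the paper's `ψ` is `coneMap f' f g' g h hh` and its `φ`
is `coneMap g'.neg g f'.neg f h hh.transpose`. -/
def coneMap {X' Y' X Y : Cx C} (a' : CxHom X' Y') (a : CxHom X Y)
    (u' : CxHom X' X) (u : CxHom Y' Y) (h : ∀ n, X'.X (n + 1) ⟶ Y.X n)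
    (hh : IsHomotopy (u.comp a') (a.comp u') h) :
    CxHom (cone a') (cone a) where
  f n := biprod.lift (biprod.fst ≫ u'.f (n + 1)) (biprod.fst ≫ h n + biprod.snd ≫ u.f n)
  comm n := by
    have hsq : u'.f (n + 1) ≫ a.f (n + 1)
        = a'.f (n + 1) ≫ u.f (n + 1) - (X'.d (n + 1) ≫ h (n + 1) + h n ≫ Y.d n) := by
      rw [← hh n]; simp [CxHom.comp]
    apply biprod.hom_ext
    · simp [cone, u'.comm]
    · simp only [cone, Category.assoc, biprod.lift_snd, Preadditive.comp_add,
        Preadditive.add_comp, biprod.lift_fst_assoc, biprod.lift_snd_assoc,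
        Preadditive.neg_comp, Preadditive.comp_neg, u.comm, hsq, Preadditive.comp_sub]
      abel

omit [HasBinaryBiproducts C] in
theorem IsHomotopy.transpose {X' Y' X Y : Cx C} {a' : CxHom X' Y'} {a : CxHom X Y}
    {u' : CxHom X' X} {u : CxHom Y' Y} {h : ∀ n, X'.X (n + 1) ⟶ Y.X n}
    (hh : IsHomotopy (u.comp a') (a.comp u') h) :
    IsHomotopy (a.comp u'.neg) (u.comp a'.neg) h := fun n => by
  rw [← hh n]
  simp only [CxHom.comp, CxHom.neg, Preadditive.neg_comp]
  abel

def biprodSwapMiddle (P Q R S : C) : (P ⊞ Q) ⊞ (R ⊞ S) ⟶ (P ⊞ R) ⊞ (Q ⊞ S) :=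
  biprod.lift (biprod.lift (biprod.fst ≫ biprod.fst) (biprod.snd ≫ biprod.fst))
    (biprod.lift (biprod.fst ≫ biprod.snd) (biprod.snd ≫ biprod.snd))

@[simp]
theorem biprodSwapMiddle_comp_biprodSwapMiddle (P Q R S : C) :
    biprodSwapMiddle P Q R S ≫ biprodSwapMiddle P R Q S = 𝟙 _ := by
  apply biprod.hom_ext <;> apply biprod.hom_ext <;> simp [biprodSwapMiddle]

def CxHom.ofDegreewiseInverse {E F : Cx C} (u : CxHom E F) (v : ∀ n, F.X n ⟶ E.X n)
    (hvu : ∀ n, v n ≫ u.f n = 𝟙 _) (huv : ∀ n, u.f n ≫ v n = 𝟙 _) : CxHom F E where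
  f := v
  comm n := calc
    v n ≫ E.d n = v n ≫ E.d n ≫ u.f (n + 1) ≫ v (n + 1) := by rw [huv, Category.comp_id]
    _ = v n ≫ u.f n ≫ F.d n ≫ v (n + 1) := by
      rw [← Category.assoc (E.d n), ← u.comm, Category.assoc]
    _ = F.d n ≫ v (n + 1) := by rw [← Category.assoc (v n), hvu, Category.id_comp]

/-- Both iterated cones have summands `X'ⁿ⁺², Xⁿ⁺¹, Y'ⁿ⁺¹, Yⁿ`, grouped differently; the
negations in the transposed square make the differentials agree once the middle two are
exchanged. -/
def coneConeSwap {X' Y' X Y : Cx C} (a' : CxHom X' Y') (a : CxHom X Y)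
    (u' : CxHom X' X) (u : CxHom Y' Y) (h : ∀ n, X'.X (n + 1) ⟶ Y.X n)
    (hh : IsHomotopy (u.comp a') (a.comp u') h) :
    CxHom (cone (coneMap u'.neg u a'.neg a h hh.transpose)) (cone (coneMap a' a u' u h hh)) where
  f n := biprodSwapMiddle _ _ _ _
  comm n := by
    apply biprod.hom_ext <;> apply biprod.hom_ext <;>
      simp [cone, coneMap, CxHom.neg, biprodSwapMiddle] <;> abel

/-- Lemma 2.3 of Burgos Gil–Freixas–Liţcanu.  Let `C` be an
additive category with binary biproducts, let `f' : E' → F'`, `f : E → F`,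
`g' : E' → E`, `g : F' → F` be morphisms of cochain complexes in `C`, and let `h` be
a homotopy between `g∘f'` and `f∘g'`, i.e. `g f' - f g' = d h + h d`.  Then the
degreewise maps `ψ : cone(f') → cone(f)`, `ψ(x',y') = (g'(x'), g(y') + h(x'))`, and
`φ : cone(-g') → cone(g)`, `φ(x',x) = (-f'(x'), f(x) + h(x'))`, are morphisms of
complexes, and a suitable reordering of the direct sum factors gives an isomorphism
of complexes `cone(φ) ≅ cone(ψ)`. -/
theorem statement_0 {C : Type*} [CategoryTheory.Category C]
    [CategoryTheory.Preadditive C] [CategoryTheory.Limits.HasBinaryBiproducts C]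
    {E' F' E F : Cx C} (f' : CxHom E' F') (f : CxHom E F) (g' : CxHom E' E)
    (g : CxHom F' F) (h : ∀ n, E'.X (n + 1) ⟶ F.X n)
    (hh : ∀ n, f'.f (n + 1) ≫ g.f (n + 1) - g'.f (n + 1) ≫ f.f (n + 1)
      = E'.d (n + 1) ≫ h (n + 1) + h n ≫ F.d n) :
    ∃ (ψ : CxHom (cone f') (cone f)) (φ : CxHom (cone g'.neg) (cone g)),
      (∀ n, ψ.f n = CategoryTheory.Limits.biprod.lift
          (CategoryTheory.Limits.biprod.fst ≫ g'.f (n + 1))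
          (CategoryTheory.Limits.biprod.fst ≫ h n +
            CategoryTheory.Limits.biprod.snd ≫ g.f n)) ∧
      (∀ n, φ.f n = CategoryTheory.Limits.biprod.lift
          (CategoryTheory.Limits.biprod.fst ≫ (-f'.f (n + 1)))
          (CategoryTheory.Limits.biprod.fst ≫ h n +
            CategoryTheory.Limits.biprod.snd ≫ f.f n)) ∧
      ∃ (θ : CxHom (cone φ) (cone ψ)) (θ' : CxHom (cone ψ) (cone φ)),
        θ.comp θ' = CxHom.id (cone ψ) ∧ θ'.comp θ = CxHom.id (cone φ) := by
  let θ := coneConeSwap f' f g' g h hh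
  let θ' := θ.ofDegreewiseInverse (fun _ => biprodSwapMiddle _ _ _ _)
    (fun _ => biprodSwapMiddle_comp_biprodSwapMiddle _ _ _ _)
    (fun _ => biprodSwapMiddle_comp_biprodSwapMiddle _ _ _ _)
  refine ⟨_, _, fun _ => rfl, fun _ => rfl, θ, θ', ?_, ?_⟩ <;>
    ext n : 2 <;> exact biprodSwapMiddle_comp_biprodSwapMiddle _ _ _ _

end
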